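/- With the WSABI-L setup, set Ω := K_XX^{-1} and define the GP posterior variance C̃(x) := v N(x; x, W) − v² Σ_{k,l=1}^n Ω_{kl} N(x; X_k, W) N(x; X_l, W), noting N(x; x, W) = det(2πW)^{−1/2}. Then for every x ∈ ℝ^d, m̃(x)² C̃(x) = Σ_{i,j=1}^n w'^v_{ij} N(x; (X_i + X_j)/2, W/2) − Σ_{i,j,k,l=1}^n w'^{vv}_{ijkl} N(x; (X_i + X_j + X_k + X_l)/4, W/4), where w'^v_{ij} := v³ det(2πW)^{−1/2} ω_i ω_j N(X_i; X_j, 2W) and w'^{vv}_{ijkl} := v⁴ ω_i ω_j Ω_{kl} N(X_l; X_i, 2W) N(X_k; X_j, 2W) N( (X_k + X_j)/2 ; (X_i + X_l)/2, W ). -/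
import Mathlib


open MeasureTheory Matrix

/-- The multivariate Gaussian density
`N(x; m, Σ) = det(2πΣ)^{-1/2} exp(-½ (x-m)ᵀ Σ⁻¹ (x-m))` on `ℝ^d`
(for a symmetric positive definite covariance matrix `Σ`). -/
noncomputable def gaussDensity {d : ℕ} (m : Fin d → ℝ) (S : Matrix (Fin d) (Fin d) ℝ)
    (x : Fin d → ℝ) : ℝ :=
  (Real.sqrt ((2 * Real.pi) ^ d * S.det))⁻¹ *
    Real.exp (-(1 / 2) * ((x - m) ⬝ᵥ (S⁻¹ *ᵥ (x - m))))

/-- WSABI-L setup: the Gram matrix `K_XX` with entries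
`(K_XX)_{ij} = v N(X_i; X_j, W)` of the squared-exponential kernel
`K(x, x') = v N(x; x', W)` at the points `X_1, …, X_n`. -/
noncomputable def gramKxx {d n : ℕ} (v : ℝ) (W : Matrix (Fin d) (Fin d) ℝ)
    (X : Fin n → (Fin d → ℝ)) : Matrix (Fin n) (Fin n) ℝ :=
  Matrix.of fun i j => v * gaussDensity (X j) W (X i)

/-- WSABI-L setup: the Woodbury vector `ω := K_XX⁻¹ y`. -/
noncomputable def woodbury {d n : ℕ} (v : ℝ) (W : Matrix (Fin d) (Fin d) ℝ)
    (X : Fin n → (Fin d → ℝ)) (y : Fin n → ℝ) : Fin n → ℝ :=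
  (gramKxx v W X)⁻¹ *ᵥ y

/-- WSABI-L setup: the Gaussian-process posterior mean
`m̃(x) := v Σ_i ω_i N(x; X_i, W)`. -/
noncomputable def gpMean {d n : ℕ} (v : ℝ) (W : Matrix (Fin d) (Fin d) ℝ)
    (X : Fin n → (Fin d → ℝ)) (y : Fin n → ℝ) (x : Fin d → ℝ) : ℝ :=
  v * ∑ i, woodbury v W X y i * gaussDensity (X i) W x

/-- WSABI-L setup: the Gaussian-process posterior variance
`C̃(x) := v N(x; x, W) − v² Σ_{k,l} Ω_{kl} N(x; X_k, W) N(x; X_l, W)`,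
where `Ω := K_XX⁻¹`. -/
noncomputable def gpVar {d n : ℕ} (v : ℝ) (W : Matrix (Fin d) (Fin d) ℝ)
    (X : Fin n → (Fin d → ℝ)) (x : Fin d → ℝ) : ℝ :=
  v * gaussDensity x W x -
    v ^ 2 * ∑ k, ∑ l, (gramKxx v W X)⁻¹ k l *
      gaussDensity (X k) W x * gaussDensity (X l) W x

lemma dot_expand {d : ℕ} (M : Matrix (Fin d) (Fin d) ℝ) (u w : Fin d → ℝ) :
    u ⬝ᵥ (M *ᵥ w) = ∑ i, ∑ j, u i * M i j * w j := by
  simp [dotProduct, mulVec, Finset.mul_sum, mul_assoc]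

lemma quad_identity {d : ℕ} (M : Matrix (Fin d) (Fin d) ℝ) (a b x : Fin d → ℝ) :
    (x - a) ⬝ᵥ (M *ᵥ (x - a)) + (x - b) ⬝ᵥ (M *ᵥ (x - b))
      = (1/2 : ℝ) * ((a - b) ⬝ᵥ (M *ᵥ (a - b)))
        + 2 * ((x - (1/2 : ℝ) • (a + b)) ⬝ᵥ (M *ᵥ (x - (1/2 : ℝ) • (a + b)))) := by
  simp only [dot_expand, Finset.mul_sum, ← Finset.sum_add_distrib]
  refine Finset.sum_congr rfl fun i _ => ?_
  refine Finset.sum_congr rfl fun j _ => ?_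
  simp only [Pi.sub_apply, Pi.smul_apply, Pi.add_apply, smul_eq_mul]
  ring

lemma smul_matrix_inv {d : ℕ} {W : Matrix (Fin d) (Fin d) ℝ} (c : ℝ) (hc : c ≠ 0)
    (h : IsUnit W.det) : ((c : ℝ) • W)⁻¹ = c⁻¹ • W⁻¹ := by
  apply Matrix.inv_eq_right_inv
  rw [Matrix.smul_mul, Matrix.mul_smul, smul_smul, mul_inv_cancel₀ hc, one_smul,
    Matrix.mul_nonsing_inv _ h]

lemma gauss_prod {d : ℕ} {W : Matrix (Fin d) (Fin d) ℝ} (hdet : 0 < W.det)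
    (a b x : Fin d → ℝ) :
    gaussDensity a W x * gaussDensity b W x
      = gaussDensity b ((2 : ℝ) • W) a *
        gaussDensity ((1/2 : ℝ) • (a + b)) ((1/2 : ℝ) • W) x := by
  have hp : (0 : ℝ) < (2 * Real.pi) ^ d := by positivity
  have hu : IsUnit W.det := (ne_of_gt hdet).isUnit
  have h2 : ((2 : ℝ) • W)⁻¹ = (2⁻¹ : ℝ) • W⁻¹ := smul_matrix_inv 2 two_ne_zero hu
  have hh : (((1/2 : ℝ)) • W)⁻¹ = (2 : ℝ) • W⁻¹ := by
    rw [smul_matrix_inv (1/2) (by norm_num) hu]; norm_num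
  unfold gaussDensity
  rw [h2, hh]
  have hd2 : ((2 : ℝ) • W).det = 2 ^ d * W.det := by
    rw [Matrix.det_smul]; simp
  have hdh : (((1/2 : ℝ)) • W).det = (1/2 : ℝ) ^ d * W.det := by
    rw [Matrix.det_smul]; simp
  rw [hd2, hdh]
  have hsqrt : (Real.sqrt ((2 * Real.pi) ^ d * W.det))⁻¹ *
      (Real.sqrt ((2 * Real.pi) ^ d * W.det))⁻¹
      = (Real.sqrt ((2 * Real.pi) ^ d * (2 ^ d * W.det)))⁻¹ *
        (Real.sqrt ((2 * Real.pi) ^ d * ((1/2 : ℝ) ^ d * W.det)))⁻¹ := by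
    have h21 : (2 : ℝ) ^ d * (1/2 : ℝ) ^ d = 1 := by
      rw [← mul_pow]; norm_num
    have key : ((2 * Real.pi) ^ d * (2 ^ d * W.det)) *
        ((2 * Real.pi) ^ d * ((1/2 : ℝ) ^ d * W.det))
        = ((2 * Real.pi) ^ d * W.det) ^ 2 := by
      have : ((2 * Real.pi) ^ d * (2 ^ d * W.det)) *
          ((2 * Real.pi) ^ d * ((1/2 : ℝ) ^ d * W.det))
          = ((2 * Real.pi) ^ d * W.det) ^ 2 * ((2 : ℝ) ^ d * (1/2 : ℝ) ^ d) := by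
        ring
      rw [this, h21, mul_one]
    rw [← mul_inv, ← mul_inv, Real.mul_self_sqrt (by positivity),
      ← Real.sqrt_mul (by positivity), key, Real.sqrt_sq (by positivity)]
  have hexp : Real.exp (-(1 / 2) * ((x - a) ⬝ᵥ (W⁻¹ *ᵥ (x - a)))) *
      Real.exp (-(1 / 2) * ((x - b) ⬝ᵥ (W⁻¹ *ᵥ (x - b))))
      = Real.exp (-(1 / 2) * ((a - b) ⬝ᵥ ((2⁻¹ : ℝ) • W⁻¹ *ᵥ (a - b)))) *
        Real.exp (-(1 / 2) * ((x - (1/2 : ℝ) • (a + b)) ⬝ᵥ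
          ((2 : ℝ) • W⁻¹ *ᵥ (x - (1/2 : ℝ) • (a + b))))) := by
    rw [← Real.exp_add, ← Real.exp_add]
    congr 1
    have hq := quad_identity W⁻¹ a b x
    simp only [Matrix.smul_mulVec, dotProduct_smul, smul_eq_mul]
    nlinarith [hq]
  calc (Real.sqrt ((2 * Real.pi) ^ d * W.det))⁻¹ *
        Real.exp (-(1 / 2) * ((x - a) ⬝ᵥ (W⁻¹ *ᵥ (x - a)))) *
        ((Real.sqrt ((2 * Real.pi) ^ d * W.det))⁻¹ *
        Real.exp (-(1 / 2) * ((x - b) ⬝ᵥ (W⁻¹ *ᵥ (x - b)))))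
      = ((Real.sqrt ((2 * Real.pi) ^ d * W.det))⁻¹ *
          (Real.sqrt ((2 * Real.pi) ^ d * W.det))⁻¹) *
        (Real.exp (-(1 / 2) * ((x - a) ⬝ᵥ (W⁻¹ *ᵥ (x - a)))) *
          Real.exp (-(1 / 2) * ((x - b) ⬝ᵥ (W⁻¹ *ᵥ (x - b))))) := by ring
    _ = _ := by
        rw [hsqrt, hexp]
        simp only [Matrix.smul_mulVec]
        ring

lemma gauss_self {d : ℕ} (W : Matrix (Fin d) (Fin d) ℝ) (x : Fin d → ℝ) :
    gaussDensity x W x = (Real.sqrt ((2 * Real.pi) ^ d * W.det))⁻¹ := by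
  simp [gaussDensity]

/-- With the WSABI-L setup, set `Ω := K_XX⁻¹` and let
`C̃(x) := v N(x; x, W) − v² Σ_{k,l} Ω_{kl} N(x; X_k, W) N(x; X_l, W)` be the GP
posterior variance (note `N(x; x, W) = det(2πW)^{−1/2}`).  Then for every `x`,
`m̃(x)² C̃(x) = Σ_{i,j} w'^v_{ij} N(x; (X_i+X_j)/2, W/2)
  − Σ_{i,j,k,l} w'^{vv}_{ijkl} N(x; (X_i+X_j+X_k+X_l)/4, W/4)`,
where `w'^v_{ij} := v³ det(2πW)^{−1/2} ω_i ω_j N(X_i; X_j, 2W)` and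
`w'^{vv}_{ijkl} := v⁴ ω_i ω_j Ω_{kl} N(X_l; X_i, 2W) N(X_k; X_j, 2W)
  N((X_k+X_j)/2; (X_i+X_l)/2, W)`. -/
theorem statement12
    {d n : ℕ} (v : ℝ) (hv : 0 < v)
    (W : Matrix (Fin d) (Fin d) ℝ) (hW : W.PosDef)
    (X : Fin n → (Fin d → ℝ)) (y : Fin n → ℝ)
    (hK : IsUnit (gramKxx v W X).det) :
    ∀ x : Fin d → ℝ,
      gpMean v W X y x ^ 2 * gpVar v W X x
        = (∑ i, ∑ j,
            (v ^ 3 * (Real.sqrt ((2 * Real.pi) ^ d * W.det))⁻¹ *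
              woodbury v W X y i * woodbury v W X y j *
              gaussDensity (X j) ((2 : ℝ) • W) (X i)) *
            gaussDensity ((1 / 2 : ℝ) • (X i + X j)) ((1 / 2 : ℝ) • W) x)
          - ∑ i, ∑ j, ∑ k, ∑ l,
            (v ^ 4 * woodbury v W X y i * woodbury v W X y j *
              (gramKxx v W X)⁻¹ k l *
              gaussDensity (X i) ((2 : ℝ) • W) (X l) *
              gaussDensity (X j) ((2 : ℝ) • W) (X k) *
              gaussDensity ((1 / 2 : ℝ) • (X i + X l)) W ((1 / 2 : ℝ) • (X k + X j))) *
            gaussDensity ((1 / 4 : ℝ) • (X i + X j + X k + X l)) ((1 / 4 : ℝ) • W) x := by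
  intro x
  have hdet : 0 < W.det := hW.det_pos
  set s : ℝ := (Real.sqrt ((2 * Real.pi) ^ d * W.det))⁻¹ with hs
  set ω : Fin n → ℝ := woodbury v W X y with hω
  set Ω : Matrix (Fin n) (Fin n) ℝ := (gramKxx v W X)⁻¹ with hΩ
  set g : Fin n → ℝ := fun i => gaussDensity (X i) W x with hg
  have key1 : ∀ a b, gaussDensity a W x * gaussDensity b W x
      = gaussDensity b ((2 : ℝ) • W) a *
        gaussDensity ((1/2 : ℝ) • (a + b)) ((1/2 : ℝ) • W) x :=
    fun a b => gauss_prod hdet a b x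
  have hdet' : 0 < ((1/2 : ℝ) • W).det := by
    rw [Matrix.det_smul]
    simp only [Fintype.card_fin]
    positivity
  have key2 : ∀ a b, gaussDensity a ((1/2 : ℝ) • W) x * gaussDensity b ((1/2 : ℝ) • W) x
      = gaussDensity b W a * gaussDensity ((1/2 : ℝ) • (a + b)) ((1/4 : ℝ) • W) x := by
    intro a b
    have h := gauss_prod hdet' a b x
    have e1 : (2 : ℝ) • ((1/2 : ℝ) • W) = W := by rw [smul_smul]; norm_num
    have e2 : (1/2 : ℝ) • ((1/2 : ℝ) • W) = (1/4 : ℝ) • W := by rw [smul_smul]; norm_num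
    rw [e1, e2] at h
    exact h
  have key4 : ∀ i j k l : Fin n,
      g i * g j * (g k * g l)
        = gaussDensity (X i) ((2 : ℝ) • W) (X l) *
          gaussDensity (X j) ((2 : ℝ) • W) (X k) *
          gaussDensity ((1/2 : ℝ) • (X i + X l)) W ((1/2 : ℝ) • (X k + X j)) *
          gaussDensity ((1/4 : ℝ) • (X i + X j + X k + X l)) ((1/4 : ℝ) • W) x := by
    intro i j k l
    have h1 := key1 (X l) (X i)
    have h2 := key1 (X k) (X j)
    have m1 : (1/2 : ℝ) • (X l + X i) = (1/2 : ℝ) • (X i + X l) := by rw [add_comm]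
    rw [m1] at h1
    have h3 := key2 ((1/2 : ℝ) • (X k + X j)) ((1/2 : ℝ) • (X i + X l))
    have m4 : (1/2 : ℝ) • ((1/2 : ℝ) • (X k + X j) + (1/2 : ℝ) • (X i + X l))
        = (1/4 : ℝ) • (X i + X j + X k + X l) := by module
    rw [m4] at h3
    calc g i * g j * (g k * g l)
        = (gaussDensity (X l) W x * gaussDensity (X i) W x) *
          (gaussDensity (X k) W x * gaussDensity (X j) W x) := by
          simp only [hg]; ring
      _ = (gaussDensity (X i) ((2 : ℝ) • W) (X l) *
            gaussDensity ((1/2 : ℝ) • (X i + X l)) ((1/2 : ℝ) • W) x) *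
          (gaussDensity (X j) ((2 : ℝ) • W) (X k) *
            gaussDensity ((1/2 : ℝ) • (X k + X j)) ((1/2 : ℝ) • W) x) := by
          rw [h1, h2]
      _ = gaussDensity (X i) ((2 : ℝ) • W) (X l) *
            gaussDensity (X j) ((2 : ℝ) • W) (X k) *
          (gaussDensity ((1/2 : ℝ) • (X k + X j)) ((1/2 : ℝ) • W) x *
            gaussDensity ((1/2 : ℝ) • (X i + X l)) ((1/2 : ℝ) • W) x) := by ring
      _ = _ := by rw [h3]; ring
  have hA : (∑ i, ∑ j,
        (v ^ 3 * s * ω i * ω j * gaussDensity (X j) ((2 : ℝ) • W) (X i)) *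
          gaussDensity ((1 / 2 : ℝ) • (X i + X j)) ((1 / 2 : ℝ) • W) x)
      = ∑ i, ∑ j, v ^ 3 * s * (ω i * g i) * (ω j * g j) := by
    refine Finset.sum_congr rfl fun i _ => Finset.sum_congr rfl fun j _ => ?_
    have h := key1 (X i) (X j)
    calc (v ^ 3 * s * ω i * ω j * gaussDensity (X j) ((2 : ℝ) • W) (X i)) *
          gaussDensity ((1 / 2 : ℝ) • (X i + X j)) ((1 / 2 : ℝ) • W) x
        = v ^ 3 * s * ω i * ω j *
            (gaussDensity (X j) ((2 : ℝ) • W) (X i) *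
              gaussDensity ((1 / 2 : ℝ) • (X i + X j)) ((1 / 2 : ℝ) • W) x) := by ring
      _ = v ^ 3 * s * ω i * ω j * (gaussDensity (X i) W x * gaussDensity (X j) W x) := by
          rw [← h]
      _ = v ^ 3 * s * (ω i * g i) * (ω j * g j) := by simp only [hg]; ring
  have hB : (∑ i, ∑ j, ∑ k, ∑ l,
        (v ^ 4 * ω i * ω j * Ω k l *
          gaussDensity (X i) ((2 : ℝ) • W) (X l) *
          gaussDensity (X j) ((2 : ℝ) • W) (X k) *
          gaussDensity ((1 / 2 : ℝ) • (X i + X l)) W ((1 / 2 : ℝ) • (X k + X j))) *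
        gaussDensity ((1 / 4 : ℝ) • (X i + X j + X k + X l)) ((1 / 4 : ℝ) • W) x)
      = ∑ i, ∑ j, ∑ k, ∑ l, v ^ 4 * (ω i * g i) * (ω j * g j) * (Ω k l * g k * g l) := by
    refine Finset.sum_congr rfl fun i _ => Finset.sum_congr rfl fun j _ =>
      Finset.sum_congr rfl fun k _ => Finset.sum_congr rfl fun l _ => ?_
    have h := key4 i j k l
    calc (v ^ 4 * ω i * ω j * Ω k l *
          gaussDensity (X i) ((2 : ℝ) • W) (X l) *
          gaussDensity (X j) ((2 : ℝ) • W) (X k) *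
          gaussDensity ((1 / 2 : ℝ) • (X i + X l)) W ((1 / 2 : ℝ) • (X k + X j))) *
        gaussDensity ((1 / 4 : ℝ) • (X i + X j + X k + X l)) ((1 / 4 : ℝ) • W) x
        = v ^ 4 * ω i * ω j * Ω k l *
            (gaussDensity (X i) ((2 : ℝ) • W) (X l) *
              gaussDensity (X j) ((2 : ℝ) • W) (X k) *
              gaussDensity ((1 / 2 : ℝ) • (X i + X l)) W ((1 / 2 : ℝ) • (X k + X j)) *
              gaussDensity ((1 / 4 : ℝ) • (X i + X j + X k + X l)) ((1 / 4 : ℝ) • W) x) := by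
          ring
      _ = v ^ 4 * ω i * ω j * Ω k l * (g i * g j * (g k * g l)) := by rw [← h]
      _ = v ^ 4 * (ω i * g i) * (ω j * g j) * (Ω k l * g k * g l) := by ring
  have hc : gaussDensity x W x = s := gauss_self W x
  show gpMean v W X y x ^ 2 * gpVar v W X x = _
  rw [hA, hB]
  unfold gpMean gpVar
  rw [hc]
  rw [show (∑ k, ∑ l, (gramKxx v W X)⁻¹ k l *
      gaussDensity (X k) W x * gaussDensity (X l) W x)
      = ∑ k, ∑ l, Ω k l * g k * g l from rfl]
  rw [show (∑ i, woodbury v W X y i * gaussDensity (X i) W x) = ∑ i, ω i * g i from rfl]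
  have expand1 : (v * ∑ i, ω i * g i) ^ 2 * (v * s - v ^ 2 * ∑ k, ∑ l, Ω k l * g k * g l)
      = v ^ 3 * s * ((∑ i, ω i * g i) * (∑ j, ω j * g j))
        - v ^ 4 * ((∑ i, ω i * g i) * ((∑ j, ω j * g j) * (∑ k, ∑ l, Ω k l * g k * g l))) := by
    ring
  rw [expand1]
  congr 1
  · rw [Finset.sum_mul_sum]
    rw [Finset.mul_sum]
    exact Finset.sum_congr rfl fun i _ => by
      rw [Finset.mul_sum]
      exact Finset.sum_congr rfl fun j _ => by ring
  · have hB2 : (∑ i, ∑ j, ∑ k, ∑ l, v ^ 4 * (ω i * g i) * (ω j * g j) * (Ω k l * g k * g l))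
        = (∑ i, ∑ j, v ^ 4 * (ω i * g i) * (ω j * g j)) *
            (∑ k, ∑ l, Ω k l * g k * g l) := by
      calc (∑ i, ∑ j, ∑ k, ∑ l, v ^ 4 * (ω i * g i) * (ω j * g j) * (Ω k l * g k * g l))
          = ∑ i, ∑ j, (v ^ 4 * (ω i * g i) * (ω j * g j)) *
              (∑ k, ∑ l, Ω k l * g k * g l) := by
            refine Finset.sum_congr rfl fun i _ => Finset.sum_congr rfl fun j _ => ?_
            rw [Finset.mul_sum]
            exact Finset.sum_congr rfl fun k _ => (Finset.mul_sum _ _ _).symm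
        _ = _ := by
            rw [Finset.sum_mul]
            exact Finset.sum_congr rfl fun i _ => (Finset.sum_mul _ _ _).symm
    have hB3 : (∑ i, ∑ j, v ^ 4 * (ω i * g i) * (ω j * g j))
        = v ^ 4 * ((∑ i, ω i * g i) * (∑ j, ω j * g j)) := by
      rw [Finset.sum_mul_sum, Finset.mul_sum]
      refine Finset.sum_congr rfl fun i _ => ?_
      rw [Finset.mul_sum]
      exact Finset.sum_congr rfl fun j _ => by ring
    rw [hB2, hB3]
    ring
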